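/- Let 𝓛 : ℝ^d → ℝ be L-smooth and bounded below by 𝓛⋆. On a probability space with filtration (𝓕_t), let θ^(0) be deterministic and define θ^(t+1) = θ^(t) − η (I + λ I_G^(t)) g_t, where λ ≥ 0, g_t is 𝓕_{t+1}-measurable with E[g_t | 𝓕_t] = ∇𝓛(θ^(t)) and E[‖g_t − ∇𝓛(θ^(t))‖² | 𝓕_t] ≤ σ², and I_G^(t) is an 𝓕_t-measurable symmetric positive semidefinite d×d matrix with ‖I_G^(t)‖_op ≤ G. If 0 < η ≤ 1/(L(1+λG)²), then for every T ≥ 1: (1/T) Σ_{t=0}^{T−1} E[‖∇𝓛(θ^(t))‖²] ≤ 2(𝓛(θ^(0)) − 𝓛⋆)/(ηT) + η·L·(1+λG)²·σ². -/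

import Mathlib

/-!
Write `Δₜ = θ^(t+1) − θ^(t) = −η Pₜ gₜ` with `Pₜ = I + λ I_G^(t)`. The descent lemma for the
`L`-smooth loss gives, along every trajectory,
`𝓛⋆ − 𝓛(θ^(0)) ≤ 𝓛(θ^(T)) − 𝓛(θ^(0)) ≤ Σ_{t<T} (⟪∇𝓛(θ^(t)), Δₜ⟫ + L/2 ‖Δₜ‖²)`.
Splitting `gₜ = ∇ₜ + ξₜ` into gradient and noise, each summand is bounded by a quadratic
expression in which `ξₜ` enters linearly only through `⟪Pₜ* ∇ₜ, ξₜ⟫` and `⟪∇ₜ, ξₜ⟫`; these have mean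
zero because `ξₜ` has zero conditional mean given `𝓕ₜ` and the other factor is `𝓕ₜ`-measurable.
With `⟪v, Pₜ v⟫ ≥ ‖v‖²`, `‖Pₜ‖ ≤ 1 + λG`, `E‖ξₜ‖² ≤ σ²` and `ηL(1+λG)² ≤ 1`, each summand has
expectation at most `−(η/2) E‖∇ₜ‖² + η²L(1+λG)²σ²/2`; summing over `t < T` gives the bound.
All these expectations are finite: `∇ₜ` is square integrable by induction on `t`, since the
gradient is Lipschitz and `‖Δₜ‖ ≤ η(1+λG)‖gₜ‖`.
-/

open MeasureTheory
open scoped NNReal RealInnerProductSpace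

section

variable {E : Type*} [NormedAddCommGroup E] [InnerProductSpace ℝ E]

variable [CompleteSpace E] in
theorem image_add_le_of_lipschitzWith_gradient {f : E → ℝ} {K : ℝ≥0} (hf : Differentiable ℝ f)
    (hK : LipschitzWith K (gradient f)) (a v : E) :
    f (a + v) ≤ f a + ⟪gradient f a, v⟫ + K / 2 * ‖v‖ ^ 2 := by
  set φ : ℝ → ℝ := fun s => f (a + s • v) - s * ⟪gradient f a, v⟫ - K / 2 * s ^ 2 * ‖v‖ ^ 2
  have hφ : ∀ s, HasDerivAt φ
      (⟪gradient f (a + s • v) - gradient f a, v⟫ - K * s * ‖v‖ ^ 2) s := by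
    intro s
    have hline : HasDerivAt (fun s : ℝ => a + s • v) v s := by
      simpa using ((hasDerivAt_id s).smul_const v).const_add a
    have hfline := (hf (a + s • v)).hasGradientAt.hasFDerivAt.comp_hasDerivAt s hline
    refine ((hfline.sub ((hasDerivAt_id s).mul_const ⟪gradient f a, v⟫)).sub
      (((hasDerivAt_pow 2 s).const_mul (K / 2 : ℝ)).mul_const (‖v‖ ^ 2))).congr_deriv ?_
    simp only [inner_sub_left, InnerProductSpace.toDual_apply_apply]
    ring
  have hφ_anti : AntitoneOn φ (Set.Ici 0) := by
    refine antitoneOn_of_deriv_nonpos (convex_Ici 0)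
      (fun s _ => (hφ s).continuousAt.continuousWithinAt)
      (fun s _ => (hφ s).differentiableAt.differentiableWithinAt) fun s hs => ?_
    rw [interior_Ici, Set.mem_Ioi] at hs
    rw [(hφ s).deriv, sub_nonpos]
    calc ⟪gradient f (a + s • v) - gradient f a, v⟫
        ≤ ‖gradient f (a + s • v) - gradient f a‖ * ‖v‖ := real_inner_le_norm _ _
      _ ≤ K * ‖a + s • v - a‖ * ‖v‖ := by gcongr; exact hK.norm_sub_le _ _
      _ = K * s * ‖v‖ ^ 2 := by
        rw [add_sub_cancel_left, norm_smul, Real.norm_of_nonneg hs.le]; ring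
  have h := hφ_anti Set.self_mem_Ici (Set.mem_Ici.2 zero_le_one) zero_le_one
  simp only [φ, one_smul, zero_smul, add_zero, one_pow, zero_mul, sub_zero, one_mul] at h
  linarith

theorem norm_one_add_smul_le {A : E →L[ℝ] E} {lam G : ℝ} (hlam : 0 ≤ lam) (hA : ‖A‖ ≤ G) :
    ‖1 + lam • A‖ ≤ 1 + lam * G :=
  calc ‖1 + lam • A‖ ≤ ‖(1 : E →L[ℝ] E)‖ + ‖lam • A‖ := norm_add_le _ _
    _ ≤ 1 + lam * G := by
      rw [norm_smul, Real.norm_of_nonneg hlam]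
      exact add_le_add (ContinuousLinearMap.norm_id_le) (mul_le_mul_of_nonneg_left hA hlam)

theorem norm_sq_le_inner_one_add_smul_apply {A : E →L[ℝ] E} {lam : ℝ} (hlam : 0 ≤ lam)
    (hA : ∀ v, 0 ≤ ⟪A v, v⟫) (v : E) : ‖v‖ ^ 2 ≤ ⟪v, (1 + lam • A) v⟫ := by
  rw [add_apply, one_apply_eq_self, smul_apply, inner_add_right, real_inner_self_eq_norm_sq,
    real_inner_smul_right, real_inner_comm]
  exact le_add_of_nonneg_right (mul_nonneg hlam (hA v))

end

theorem MeasureTheory.StronglyMeasurable.clm_apply {Ω E F : Type*} {m : MeasurableSpace Ω}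
    [NormedAddCommGroup E] [NormedSpace ℝ E] [NormedAddCommGroup F] [NormedSpace ℝ F]
    {A : Ω → E →L[ℝ] F} {x : Ω → E} (hA : StronglyMeasurable[m] A)
    (hx : StronglyMeasurable[m] x) :
    StronglyMeasurable[m] fun ω => A ω (x ω) :=
  isBoundedBilinearMap_apply.continuous.comp_stronglyMeasurable (hA.prodMk hx)

theorem MeasureTheory.MemLp.integrable_norm_sq {Ω F : Type*} {m : MeasurableSpace Ω}
    {μ : Measure Ω} [NormedAddCommGroup F] {X : Ω → F} (hX : MemLp X 2 μ) :
    Integrable (fun ω => ‖X ω‖ ^ 2) μ :=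
  (memLp_two_iff_integrable_sq_norm hX.1).1 hX

section

variable {Ω E : Type*} {m m0 : MeasurableSpace Ω} {μ : Measure Ω}
  [NormedAddCommGroup E] [InnerProductSpace ℝ E]

theorem MeasureTheory.MemLp.integrable_inner {X Y : Ω → E} (hX : MemLp X 2 μ)
    (hY : MemLp Y 2 μ) : Integrable (fun ω => ⟪X ω, Y ω⟫) μ :=
  memLp_one_iff_integrable.1 ((innerSL ℝ).memLp_of_bilin 1 hX hY)

theorem integral_inner_eq_zero_of_condExp_eq_zero [CompleteSpace E] (hm : m ≤ m0)
    [SigmaFinite (μ.trim hm)] {X ξ : Ω → E} (hX : StronglyMeasurable[m] X)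
    (hXξ : Integrable (fun ω => ⟪X ω, ξ ω⟫) μ) (hξ : Integrable ξ μ) (hξm : μ[ξ|m] =ᵐ[μ] 0) :
    ∫ ω, ⟪X ω, ξ ω⟫ ∂μ = 0 := by
  rw [← integral_condExp hm]
  refine integral_eq_zero_of_ae ?_
  filter_upwards [condExp_bilin_of_stronglyMeasurable_left (innerSL ℝ) hX hXξ hξ, hξm]
    with ω hω hξω
  rwa [hξω, Pi.zero_apply, map_zero] at hω

end

section

variable {E : Type*} [NormedAddCommGroup E] [InnerProductSpace ℝ E] [CompleteSpace E]

theorem sub_le_sum_inner_gradient_add_sq {f : E → ℝ} {K : ℝ≥0} (hf : Differentiable ℝ f)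
    (hK : LipschitzWith K (gradient f)) (x : ℕ → E) (T : ℕ) :
    f (x T) - f (x 0) ≤ ∑ t ∈ Finset.range T,
      (⟪gradient f (x t), x (t + 1) - x t⟫ + K / 2 * ‖x (t + 1) - x t‖ ^ 2) := by
  rw [← Finset.sum_range_sub (fun t => f (x t))]
  refine Finset.sum_le_sum fun t _ => ?_
  have h := image_add_le_of_lipschitzWith_gradient hf hK (x t) (x (t + 1) - x t)
  rw [add_sub_cancel] at h
  linarith

theorem inner_neg_smul_apply_add_sq_le {A : E →L[ℝ] E} {C η : ℝ} (K : ℝ≥0) (hA : ‖A‖ ≤ C)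
    (hA_coercive : ∀ v, ‖v‖ ^ 2 ≤ ⟪v, A v⟫) (hη : 0 ≤ η) (x ξ : E) :
    ⟪x, -(η • A (x + ξ))⟫ + K / 2 * ‖-(η • A (x + ξ))‖ ^ 2
      ≤ -(η - K * η ^ 2 * C ^ 2 / 2) * ‖x‖ ^ 2 - η * ⟪ContinuousLinearMap.adjoint A x, ξ⟫
        + K * η ^ 2 * C ^ 2 * ⟪x, ξ⟫ + K * η ^ 2 * C ^ 2 / 2 * ‖ξ‖ ^ 2 := by
  have hinner : ⟪x, A (x + ξ)⟫ = ⟪x, A x⟫ + ⟪ContinuousLinearMap.adjoint A x, ξ⟫ := by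
    rw [map_add, inner_add_right, ContinuousLinearMap.adjoint_inner_left]
  have hnorm : ‖A (x + ξ)‖ ^ 2 ≤ C ^ 2 * (‖x‖ ^ 2 + 2 * ⟪x, ξ⟫ + ‖ξ‖ ^ 2) := by
    rw [← norm_add_sq_real, ← mul_pow]
    gcongr
    exact A.le_of_opNorm_le hA _
  have hK : (0 : ℝ) ≤ K / 2 * η ^ 2 := by positivity
  rw [inner_neg_right, real_inner_smul_right, norm_neg, norm_smul, Real.norm_of_nonneg hη,
    mul_pow, hinner]
  nlinarith [hA_coercive x, mul_le_mul_of_nonneg_left hnorm hK]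

end

structure IsPreconditionedSGD {Ω E : Type*} {m0 : MeasurableSpace Ω} [NormedAddCommGroup E]
    [InnerProductSpace ℝ E] [CompleteSpace E] (μ : Measure Ω) (ℱ : Filtration ℕ m0)
    (f : E → ℝ) (η σ : ℝ) (θ₀ : E) (θ g : ℕ → Ω → E) (P : ℕ → Ω → E →L[ℝ] E) : Prop where
  init : θ 0 = fun _ => θ₀
  update : ∀ t ω, θ (t + 1) ω = θ t ω - η • P t ω (g t ω)
  stronglyMeasurable_gradEst : ∀ t, StronglyMeasurable[ℱ (t + 1)] (g t)
  stronglyMeasurable_precond : ∀ t, StronglyMeasurable[ℱ t] (P t)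
  condExp_gradEst : ∀ t, μ[g t|ℱ t] =ᵐ[μ] fun ω => gradient f (θ t ω)
  integrable_noise_sq : ∀ t, Integrable (fun ω => ‖g t ω - gradient f (θ t ω)‖ ^ 2) μ
  condExp_noise_sq_le : ∀ t,
    μ[fun ω => ‖g t ω - gradient f (θ t ω)‖ ^ 2|ℱ t] ≤ᵐ[μ] fun _ => σ ^ 2

namespace IsPreconditionedSGD

variable {Ω E : Type*} {m0 : MeasurableSpace Ω} {μ : Measure Ω} {ℱ : Filtration ℕ m0}
  [NormedAddCommGroup E] [InnerProductSpace ℝ E] [CompleteSpace E] {f : E → ℝ} {η σ : ℝ}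
  {θ₀ : E} {θ g : ℕ → Ω → E} {P : ℕ → Ω → E →L[ℝ] E} {K : ℝ≥0} {C : ℝ}
  (hS : IsPreconditionedSGD μ ℱ f η σ θ₀ θ g P)
include hS

theorem stronglyMeasurable_iterate (t : ℕ) : StronglyMeasurable[ℱ t] (θ t) := by
  induction t with
  | zero => rw [hS.init]; exact stronglyMeasurable_const
  | succ t ih =>
    rw [funext (hS.update t)]
    exact (ih.mono (ℱ.mono t.le_succ)).sub
      ((((hS.stronglyMeasurable_precond t).mono (ℱ.mono t.le_succ)).clm_apply
        (hS.stronglyMeasurable_gradEst t)).const_smul η)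

theorem stronglyMeasurable_gradient_iterate (hK : LipschitzWith K (gradient f)) (t : ℕ) :
    StronglyMeasurable[ℱ t] fun ω => gradient f (θ t ω) :=
  hK.continuous.comp_stronglyMeasurable (hS.stronglyMeasurable_iterate t)

theorem memLp_noise (hK : LipschitzWith K (gradient f)) (t : ℕ) :
    MemLp (fun ω => g t ω - gradient f (θ t ω)) 2 μ :=
  (memLp_two_iff_integrable_sq_norm
    (((hS.stronglyMeasurable_gradEst t).mono (ℱ.le _)).sub
      ((hS.stronglyMeasurable_gradient_iterate hK t).mono (ℱ.le _))).aestronglyMeasurable).2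
    (hS.integrable_noise_sq t)

theorem memLp_gradEst_of_memLp_gradient (hK : LipschitzWith K (gradient f)) {t : ℕ}
    (h : MemLp (fun ω => gradient f (θ t ω)) 2 μ) : MemLp (g t) 2 μ := by
  simpa only [Pi.add_def, sub_add_cancel] using (hS.memLp_noise hK t).add h

theorem memLp_increment (hP : ∀ t ω, ‖P t ω‖ ≤ C) {t : ℕ} (hg : MemLp (g t) 2 μ) :
    MemLp (fun ω => θ (t + 1) ω - θ t ω) 2 μ := by
  refine hg.of_le_mul (c := |η| * C)
    (((hS.stronglyMeasurable_iterate (t + 1)).mono (ℱ.le _)).sub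
      ((hS.stronglyMeasurable_iterate t).mono (ℱ.le _))).aestronglyMeasurable
    (ae_of_all _ fun ω => ?_)
  rw [hS.update, sub_sub_cancel_left, norm_neg, norm_smul, Real.norm_eq_abs, mul_assoc]
  gcongr
  exact (P t ω).le_of_opNorm_le (hP t ω) _

theorem memLp_gradient_iterate [IsFiniteMeasure μ] (hK : LipschitzWith K (gradient f))
    (hP : ∀ t ω, ‖P t ω‖ ≤ C) (t : ℕ) : MemLp (fun ω => gradient f (θ t ω)) 2 μ := by
  induction t with
  | zero => simp only [hS.init]; exact memLp_const _
  | succ t ih =>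
    have hΔ : MemLp (fun ω => gradient f (θ (t + 1) ω) - gradient f (θ t ω)) 2 μ :=
      (hS.memLp_increment hP (hS.memLp_gradEst_of_memLp_gradient hK ih)).of_le_mul (c := K)
        (((hS.stronglyMeasurable_gradient_iterate hK (t + 1)).mono (ℱ.le _)).sub
          ((hS.stronglyMeasurable_gradient_iterate hK t).mono (ℱ.le _))).aestronglyMeasurable
        (ae_of_all _ fun ω => hK.norm_sub_le _ _)
    simpa only [Pi.add_def, sub_add_cancel] using hΔ.add ih

theorem condExp_noise_eq_zero [IsFiniteMeasure μ] (hK : LipschitzWith K (gradient f))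
    (hP : ∀ t ω, ‖P t ω‖ ≤ C) (t : ℕ) :
    μ[fun ω => g t ω - gradient f (θ t ω)|ℱ t] =ᵐ[μ] 0 := by
  have hgrad := hS.memLp_gradient_iterate hK hP t
  have hg := hS.memLp_gradEst_of_memLp_gradient hK hgrad
  filter_upwards [condExp_sub (m := ℱ t) (hg.integrable one_le_two) (hgrad.integrable one_le_two),
    hS.condExp_gradEst t] with ω hsub hmean
  change μ[g t - fun ω => gradient f (θ t ω)|ℱ t] ω = 0
  rw [hsub, Pi.sub_apply, hmean, condExp_of_stronglyMeasurable (ℱ.le t)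
    (hS.stronglyMeasurable_gradient_iterate hK t) (hgrad.integrable one_le_two), sub_self]

theorem integral_inner_noise_eq_zero [IsFiniteMeasure μ] (hK : LipschitzWith K (gradient f))
    (hP : ∀ t ω, ‖P t ω‖ ≤ C) {t : ℕ} {X : Ω → E} (hX : StronglyMeasurable[ℱ t] X)
    (hX2 : MemLp X 2 μ) : ∫ ω, ⟪X ω, g t ω - gradient f (θ t ω)⟫ ∂μ = 0 :=
  integral_inner_eq_zero_of_condExp_eq_zero (ℱ.le t) hX
    (hX2.integrable_inner (hS.memLp_noise hK t)) ((hS.memLp_noise hK t).integrable one_le_two)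
    (hS.condExp_noise_eq_zero hK hP t)

theorem integral_norm_sq_noise_le [IsProbabilityMeasure μ] (t : ℕ) :
    ∫ ω, ‖g t ω - gradient f (θ t ω)‖ ^ 2 ∂μ ≤ σ ^ 2 := by
  rw [← integral_condExp (ℱ.le t)]
  simpa using integral_mono_ae integrable_condExp (integrable_const _) (hS.condExp_noise_sq_le t)

theorem integrable_inner_gradient_increment_add_sq [IsFiniteMeasure μ]
    (hK : LipschitzWith K (gradient f)) (hP : ∀ t ω, ‖P t ω‖ ≤ C) (t : ℕ) :
    Integrable (fun ω => ⟪gradient f (θ t ω), θ (t + 1) ω - θ t ω⟫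
      + K / 2 * ‖θ (t + 1) ω - θ t ω‖ ^ 2) μ := by
  have hgrad := hS.memLp_gradient_iterate hK hP t
  have hΔ := hS.memLp_increment hP (hS.memLp_gradEst_of_memLp_gradient hK hgrad)
  exact (hgrad.integrable_inner hΔ).add (hΔ.integrable_norm_sq.const_mul _)

theorem integral_inner_gradient_increment_add_sq_le [IsProbabilityMeasure μ]
    (hK : LipschitzWith K (gradient f)) (hP : ∀ t ω, ‖P t ω‖ ≤ C)
    (hP_coercive : ∀ t ω v, ‖v‖ ^ 2 ≤ ⟪v, P t ω v⟫) (hη : 0 ≤ η) (hηKC : η * (K * C ^ 2) ≤ 1)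
    (t : ℕ) :
    ∫ ω, (⟪gradient f (θ t ω), θ (t + 1) ω - θ t ω⟫ + K / 2 * ‖θ (t + 1) ω - θ t ω‖ ^ 2) ∂μ
      ≤ -(η / 2) * ∫ ω, ‖gradient f (θ t ω)‖ ^ 2 ∂μ + η ^ 2 * K * C ^ 2 / 2 * σ ^ 2 := by
  set x := fun ω => gradient f (θ t ω)
  set ξ := fun ω => g t ω - gradient f (θ t ω)
  set y := fun ω => ContinuousLinearMap.adjoint (P t ω) (x ω)
  have hx : MemLp x 2 μ := hS.memLp_gradient_iterate hK hP t
  have hξ : MemLp ξ 2 μ := hS.memLp_noise hK t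
  have hy_meas : StronglyMeasurable[ℱ t] y :=
    (ContinuousLinearMap.adjoint.continuous.comp_stronglyMeasurable
      (hS.stronglyMeasurable_precond t)).clm_apply (hS.stronglyMeasurable_gradient_iterate hK t)
  have hy : MemLp y 2 μ := hx.of_le_mul (c := C) (hy_meas.mono (ℱ.le t)).aestronglyMeasurable
    (ae_of_all _ fun ω => ContinuousLinearMap.le_of_opNorm_le _
      ((LinearIsometryEquiv.norm_map _ _).trans_le (hP t ω)) _)
  have hstep : ∀ ω, θ (t + 1) ω - θ t ω = -(η • P t ω (x ω + ξ ω)) := fun ω => by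
    rw [hS.update, sub_sub_cancel_left, add_sub_cancel]
  set a := η - K * η ^ 2 * C ^ 2 / 2
  set b := K * η ^ 2 * C ^ 2
  have hpointwise : ∀ ω, ⟪x ω, θ (t + 1) ω - θ t ω⟫ + K / 2 * ‖θ (t + 1) ω - θ t ω‖ ^ 2
      ≤ -a * ‖x ω‖ ^ 2 - η * ⟪y ω, ξ ω⟫ + b * ⟪x ω, ξ ω⟫ + b / 2 * ‖ξ ω‖ ^ 2 := fun ω => by
    rw [hstep]
    exact inner_neg_smul_apply_add_sq_le K (hP t ω) (hP_coercive t ω) hη (x ω) (ξ ω)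
  have i₁ := hx.integrable_norm_sq.const_mul (-a)
  have i₂ := (hy.integrable_inner hξ).const_mul η
  have i₃ := (hx.integrable_inner hξ).const_mul b
  have i₄ := hξ.integrable_norm_sq.const_mul (b / 2)
  have i₁₂ : Integrable (fun ω => -a * ‖x ω‖ ^ 2 - η * ⟪y ω, ξ ω⟫) μ := i₁.sub i₂
  have i₁₂₃ : Integrable
      (fun ω => -a * ‖x ω‖ ^ 2 - η * ⟪y ω, ξ ω⟫ + b * ⟪x ω, ξ ω⟫) μ := i₁₂.add i₃
  have hnoise := hS.integral_norm_sq_noise_le t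
  have hx_nonneg : 0 ≤ ∫ ω, ‖x ω‖ ^ 2 ∂μ := integral_nonneg fun ω => sq_nonneg _
  calc _ ≤ ∫ ω, (-a * ‖x ω‖ ^ 2 - η * ⟪y ω, ξ ω⟫ + b * ⟪x ω, ξ ω⟫ + b / 2 * ‖ξ ω‖ ^ 2) ∂μ :=
        integral_mono (hS.integrable_inner_gradient_increment_add_sq hK hP t)
          (i₁₂₃.add i₄) hpointwise
    _ = -a * ∫ ω, ‖x ω‖ ^ 2 ∂μ - η * ∫ ω, ⟪y ω, ξ ω⟫ ∂μ + b * ∫ ω, ⟪x ω, ξ ω⟫ ∂μ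
        + b / 2 * ∫ ω, ‖ξ ω‖ ^ 2 ∂μ := by
      rw [integral_add i₁₂₃ i₄, integral_add i₁₂ i₃, integral_sub i₁ i₂,
        integral_const_mul, integral_const_mul, integral_const_mul, integral_const_mul]
    _ = -a * ∫ ω, ‖x ω‖ ^ 2 ∂μ + b / 2 * ∫ ω, ‖ξ ω‖ ^ 2 ∂μ := by
      rw [hS.integral_inner_noise_eq_zero hK hP hy_meas hy,
        hS.integral_inner_noise_eq_zero hK hP (hS.stronglyMeasurable_gradient_iterate hK t) hx]
      ring
    _ ≤ _ := by
      have hb : b ≤ η := by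
        have := mul_le_mul_of_nonneg_left hηKC hη
        simp only [b]; nlinarith
      have hb0 : 0 ≤ b := by positivity
      simp only [a]
      nlinarith [mul_le_mul_of_nonneg_left hnoise hb0, mul_le_mul_of_nonneg_right hb hx_nonneg]

theorem sum_integral_norm_sq_gradient_le [IsProbabilityMeasure μ] (hf : Differentiable ℝ f)
    (hK : LipschitzWith K (gradient f)) {fstar : ℝ} (hbdd : ∀ x, fstar ≤ f x)
    (hP : ∀ t ω, ‖P t ω‖ ≤ C) (hP_coercive : ∀ t ω v, ‖v‖ ^ 2 ≤ ⟪v, P t ω v⟫) (hη : 0 ≤ η)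
    (hηKC : η * (K * C ^ 2) ≤ 1) (T : ℕ) :
    η / 2 * ∑ t ∈ Finset.range T, ∫ ω, ‖gradient f (θ t ω)‖ ^ 2 ∂μ
      ≤ f θ₀ - fstar + T * (η ^ 2 * K * C ^ 2 / 2 * σ ^ 2) := by
  have hint := hS.integrable_inner_gradient_increment_add_sq hK hP
  have hpath : ∀ ω, fstar - f θ₀ ≤ ∑ t ∈ Finset.range T,
      (⟪gradient f (θ t ω), θ (t + 1) ω - θ t ω⟫ + K / 2 * ‖θ (t + 1) ω - θ t ω‖ ^ 2) := by
    intro ω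
    have h := sub_le_sum_inner_gradient_add_sq hf hK (fun t => θ t ω) T
    rw [hS.init] at h
    linarith [hbdd (θ T ω)]
  have hmean : fstar - f θ₀ ≤ ∑ t ∈ Finset.range T,
      ∫ ω, (⟪gradient f (θ t ω), θ (t + 1) ω - θ t ω⟫ + K / 2 * ‖θ (t + 1) ω - θ t ω‖ ^ 2) ∂μ := by
    rw [← integral_finsetSum _ fun t _ => hint t]
    simpa using integral_mono (integrable_const _) (integrable_finsetSum _ fun t _ => hint t) hpath
  have hsteps := Finset.sum_le_sum fun t (_ : t ∈ Finset.range T) =>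
    hS.integral_inner_gradient_increment_add_sq_le hK hP hP_coercive hη hηKC t
  rw [Finset.sum_add_distrib, ← Finset.mul_sum, Finset.sum_const, Finset.card_range,
    nsmul_eq_mul] at hsteps
  linarith

end IsPreconditionedSGD

theorem fire_average_gradient_bound_general
    {d : ℕ} {Ω : Type*} {m0 : MeasurableSpace Ω}
    (μ : Measure Ω) [IsProbabilityMeasure μ] (ℱ : Filtration ℕ m0)
    (𝓛 : EuclideanSpace ℝ (Fin d) → ℝ) (L Lstar : ℝ)
    (hdiff : Differentiable ℝ 𝓛)
    (hsmooth : ∀ a b, ‖gradient 𝓛 a - gradient 𝓛 b‖ ≤ L * ‖a - b‖)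
    (hbdd : ∀ p, Lstar ≤ 𝓛 p)
    (η lam G σ : ℝ) (hlam : 0 ≤ lam)
    (hη : 0 < η) (hη' : η ≤ 1 / (L * (1 + lam * G) ^ 2))
    (θ g : ℕ → Ω → EuclideanSpace ℝ (Fin d))
    (IG : ℕ → Ω → (EuclideanSpace ℝ (Fin d) →L[ℝ] EuclideanSpace ℝ (Fin d)))
    (θ0 : EuclideanSpace ℝ (Fin d)) (hθ0 : θ 0 = fun _ => θ0)
    (hupdate : ∀ t ω, θ (t + 1) ω = θ t ω - η • (g t ω + lam • (IG t ω) (g t ω)))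
    (hg_meas : ∀ t, StronglyMeasurable[ℱ (t + 1)] (g t))
    (hmean : ∀ t, μ[g t | ℱ t] =ᵐ[μ] fun ω => gradient 𝓛 (θ t ω))
    (hvar_int : ∀ t, Integrable (fun ω => ‖g t ω - gradient 𝓛 (θ t ω)‖ ^ 2) μ)
    (hvar : ∀ t, μ[fun ω => ‖g t ω - gradient 𝓛 (θ t ω)‖ ^ 2 | ℱ t]
      ≤ᵐ[μ] fun _ => σ ^ 2)
    (hIG_meas : ∀ t, StronglyMeasurable[ℱ t] (IG t))
    (hIG_psd : ∀ t ω v, 0 ≤ ⟪(IG t ω) v, v⟫)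
    (hIG_norm : ∀ t ω, ‖IG t ω‖ ≤ G) :
    ∀ T : ℕ, 1 ≤ T →
      (1 / (T : ℝ)) * ∑ t ∈ Finset.range T, ∫ ω, ‖gradient 𝓛 (θ t ω)‖ ^ 2 ∂μ
        ≤ 2 * (𝓛 θ0 - Lstar) / (η * T)
          + η * L * (1 + lam * G) ^ 2 * σ ^ 2 := by
  intro T hT
  have hLC : 0 < L * (1 + lam * G) ^ 2 := one_div_pos.1 (hη.trans_le hη')
  have hL : 0 ≤ L := (pos_of_mul_pos_left hLC (sq_nonneg _)).le
  have hK : LipschitzWith L.toNNReal (gradient 𝓛) := .of_dist_le_mul fun a b => by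
    rw [dist_eq_norm, dist_eq_norm, Real.coe_toNNReal _ hL]
    exact hsmooth a b
  have hS : IsPreconditionedSGD μ ℱ 𝓛 η σ θ0 θ g fun t ω => 1 + lam • IG t ω :=
    { init := hθ0
      update := fun t ω => by simp [hupdate]
      stronglyMeasurable_gradEst := hg_meas
      stronglyMeasurable_precond := fun t =>
        stronglyMeasurable_const.add ((hIG_meas t).const_smul lam)
      condExp_gradEst := hmean
      integrable_noise_sq := hvar_int
      condExp_noise_sq_le := hvar }
  have hsum := hS.sum_integral_norm_sq_gradient_le hdiff hK hbdd
    (fun t ω => norm_one_add_smul_le hlam (hIG_norm t ω))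
    (fun t ω => norm_sq_le_inner_one_add_smul_apply hlam (hIG_psd t ω)) hη.le
    (by rw [Real.coe_toNNReal _ hL, ← le_div_iff₀ hLC]; simpa using hη') T
  rw [Real.coe_toNNReal _ hL] at hsum
  have hT0 : (0 : ℝ) < T := by exact_mod_cast hT
  calc (1 / (T : ℝ)) * ∑ t ∈ Finset.range T, ∫ ω, ‖gradient 𝓛 (θ t ω)‖ ^ 2 ∂μ
      = 2 / (η * T) * (η / 2 * ∑ t ∈ Finset.range T, ∫ ω, ‖gradient 𝓛 (θ t ω)‖ ^ 2 ∂μ) := by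
        field_simp
    _ ≤ 2 / (η * T) * (𝓛 θ0 - Lstar + T * (η ^ 2 * L * (1 + lam * G) ^ 2 / 2 * σ ^ 2)) := by
        gcongr
    _ = 2 * (𝓛 θ0 - Lstar) / (η * T) + η * L * (1 + lam * G) ^ 2 * σ ^ 2 := by
        field_simp

/-- average gradient-norm bound for FIRE preconditioned SGD.
Under the same assumptions as the one-step descent lemma, for every `T ≥ 1`,
`(1/T) Σ_{t<T} E[‖∇𝓛(θ^(t))‖²] ≤ 2(𝓛(θ^(0)) − 𝓛⋆)/(ηT) + ηL(1+λG)²σ²`. -/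
theorem fire_average_gradient_bound
    {d : ℕ} {Ω : Type*} {m0 : MeasurableSpace Ω}
    (μ : Measure Ω) [IsProbabilityMeasure μ] (ℱ : Filtration ℕ m0)
    (𝓛 : EuclideanSpace ℝ (Fin d) → ℝ) (L Lstar : ℝ) (hL : 0 < L)
    (hdiff : Differentiable ℝ 𝓛)
    (hsmooth : ∀ a b, ‖gradient 𝓛 a - gradient 𝓛 b‖ ≤ L * ‖a - b‖)
    (hbdd : ∀ p, Lstar ≤ 𝓛 p)
    (η lam G σ : ℝ) (hlam : 0 ≤ lam) (hG : 0 ≤ G)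
    (hη : 0 < η) (hη' : η ≤ 1 / (L * (1 + lam * G) ^ 2))
    (θ g : ℕ → Ω → EuclideanSpace ℝ (Fin d))
    (IG : ℕ → Ω → (EuclideanSpace ℝ (Fin d) →L[ℝ] EuclideanSpace ℝ (Fin d)))
    (θ0 : EuclideanSpace ℝ (Fin d)) (hθ0 : θ 0 = fun _ => θ0)
    (hupdate : ∀ t ω, θ (t + 1) ω = θ t ω - η • (g t ω + lam • (IG t ω) (g t ω)))
    (hg_meas : ∀ t, StronglyMeasurable[ℱ (t + 1)] (g t))
    (hg_int : ∀ t, Integrable (g t) μ)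
    (hmean : ∀ t, μ[g t | ℱ t] =ᵐ[μ] fun ω => gradient 𝓛 (θ t ω))
    (hvar_int : ∀ t, Integrable (fun ω => ‖g t ω - gradient 𝓛 (θ t ω)‖ ^ 2) μ)
    (hvar : ∀ t, μ[fun ω => ‖g t ω - gradient 𝓛 (θ t ω)‖ ^ 2 | ℱ t]
      ≤ᵐ[μ] fun _ => σ ^ 2)
    (hIG_meas : ∀ t, StronglyMeasurable[ℱ t] (IG t))
    (hIG_symm : ∀ t ω v w, ⟪(IG t ω) v, w⟫ = ⟪v, (IG t ω) w⟫)
    (hIG_psd : ∀ t ω v, 0 ≤ ⟪(IG t ω) v, v⟫)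
    (hIG_norm : ∀ t ω, ‖IG t ω‖ ≤ G) :
    ∀ T : ℕ, 1 ≤ T →
      (1 / (T : ℝ)) * ∑ t ∈ Finset.range T, ∫ ω, ‖gradient 𝓛 (θ t ω)‖ ^ 2 ∂μ
        ≤ 2 * (𝓛 θ0 - Lstar) / (η * T)
          + η * L * (1 + lam * G) ^ 2 * σ ^ 2 :=
  fire_average_gradient_bound_general μ ℱ 𝓛 L Lstar hdiff hsmooth hbdd η lam G σ hlam hη hη' θ g IG
    θ0 hθ0 hupdate hg_meas hmean hvar_int hvar hIG_meas hIG_psd hIG_norm
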